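/- For every f, g ∈ L¹(a,b) it holds that ‖Tf − Tg‖_{L¹(a,b)} ≤ ‖f − g‖_{L¹(a,b)}, where T is the operator assigning to an integrable function the almost-everywhere derivative of the convex envelope of its primitive. -/

import Mathlib

/-!
`T` preserves order and mass, and the Crandall–Tartar argument turns this into an
`L¹`-contraction: with `h = max f g` we have `Tf, Tg ≤ Th` a.e., so
`|Tf - Tg| ≤ (Th - Tf) + (Th - Tg)`, whose integral is `∫ (h - f) + (h - g) = ∫ |f - g|`.

Mass: `F**` is convex (it has a supporting line at every interior point), continuous on `[a, b]`
and equal to `F` at the endpoints (a steep cone below `F` with vertex over an endpoint is affine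
there). Its right derivative is monotone, hence integrable, and equals `(F**)'` a.e., so
`∫ (F**)' = F b - F a`.

Order: let `G - F` be nondecreasing and suppose `(F**)'(x) > t > (G**)'(x)` at an interior `x`.
A minimiser of `F - t y` lies left of `x`, a minimiser `q` of `G - t y` lies right of `x`, and
monotonicity of `G - F` makes `q` a minimiser of `F - t y` as well. Hence `q = x`, so `x`
minimises `F** - t y` and `(F**)'(x) = t`, a contradiction.
-/

open Set MeasureTheory Filter Topology

/-- The convex envelope (convexification) of `f` on `[a,b]`. -/
noncomputable def convEnv (a b : ℝ) (f : ℝ → ℝ) : ℝ → ℝ := fun x =>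
  sInf {y : ℝ | ∃ lam x₀ x₁ : ℝ, lam ∈ Set.Icc (0:ℝ) 1 ∧ x₀ ∈ Set.Icc a b ∧
    x₁ ∈ Set.Icc a b ∧ (1 - lam) * x₀ + lam * x₁ = x ∧
    y = (1 - lam) * f x₀ + lam * f x₁}

/-- The primitive `F(x) = ∫_a^x f(y) dy`. -/
noncomputable def primit (a : ℝ) (f : ℝ → ℝ) : ℝ → ℝ := fun x => ∫ y in a..x, f y

/-- The operator `T`: `Tf = (F**)'`, the (a.e.) derivative of the convex envelope of
the primitive `F` of `f`. -/
noncomputable def Tcv (a b : ℝ) (f : ℝ → ℝ) : ℝ → ℝ :=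
  derivWithin (convEnv a b (primit a f)) (Set.Icc a b)

theorem integral_abs_sub_le_of_monotone_of_integral_eq {α : Type*} [MeasurableSpace α]
    {μ : Measure α} {T : (α → ℝ) → α → ℝ}
    (hT_int : ∀ f, Integrable f μ → Integrable (T f) μ)
    (hT_integral : ∀ f, Integrable f μ → ∫ x, T f x ∂μ = ∫ x, f x ∂μ)
    (hT_mono : ∀ f g, Integrable f μ → Integrable g μ → f ≤ g → T f ≤ᵐ[μ] T g)
    {f g : α → ℝ} (hf : Integrable f μ) (hg : Integrable g μ) :
    ∫ x, |T f x - T g x| ∂μ ≤ ∫ x, |f x - g x| ∂μ := by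
  set h := f ⊔ g
  have hh : Integrable h μ := hf.sup hg
  have hTf := hT_int f hf
  have hTg := hT_int g hg
  have hTh := hT_int h hh
  calc ∫ x, |T f x - T g x| ∂μ
      ≤ ∫ x, (T h x - T f x) + (T h x - T g x) ∂μ := by
        refine integral_mono_ae (hTf.sub hTg).abs ((hTh.sub hTf).add (hTh.sub hTg)) ?_
        filter_upwards [hT_mono f h hf hh le_sup_left, hT_mono g h hg hh le_sup_right]
          with x hfx hgx
        exact abs_sub_le_iff.2 ⟨by linarith, by linarith⟩
    _ = ∫ x, (h x - f x) + (h x - g x) ∂μ := by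
        rw [integral_add (f := fun x => T h x - T f x) (g := fun x => T h x - T g x)
            (hTh.sub hTf) (hTh.sub hTg),
          integral_add (f := fun x => h x - f x) (g := fun x => h x - g x) (hh.sub hf) (hh.sub hg),
          integral_sub hTh hTf, integral_sub hTh hTg, integral_sub hh hf, integral_sub hh hg,
          hT_integral f hf, hT_integral g hg, hT_integral h hh]
    _ = ∫ x, |f x - g x| ∂μ := by
        congr 1 with x
        rcases le_total (f x) (g x) with hfg | hfg
        · simp [h, hfg, abs_of_nonpos (sub_nonpos.2 hfg)]
        · simp [h, hfg, abs_of_nonneg (sub_nonneg.2 hfg)]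

theorem ContinuousOn.exists_forall_sub_sub_mul_dist_le {X : Type*} [PseudoMetricSpace X]
    {F : X → ℝ} {s : Set X} (hs : IsCompact s) (hF : ContinuousOn F s) {x : X} (hx : x ∈ s)
    {ε : ℝ} (hε : 0 < ε) : ∃ K, ∀ y ∈ s, F x - ε - K * dist y x ≤ F y := by
  obtain ⟨δ, hδ, hnear⟩ := Metric.continuousWithinAt_iff.1 (hF x hx) ε hε
  obtain ⟨m, hm⟩ := hs.bddBelow_image hF
  have hmF : ∀ y ∈ s, m ≤ F y := fun y hy => hm (mem_image_of_mem F hy)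
  have hK : 0 ≤ (F x - m) / δ := div_nonneg (sub_nonneg.2 (hmF x hx)) hδ.le
  refine ⟨(F x - m) / δ, fun y hy => ?_⟩
  rcases lt_or_ge (dist y x) δ with hyx | hyx
  · have := (abs_lt.1 (hnear hy hyx)).1
    linarith [mul_nonneg hK (dist_nonneg (x := y) (y := x))]
  · have : F x - m ≤ (F x - m) / δ * dist y x :=
      calc F x - m = (F x - m) / δ * δ := by field_simp
        _ ≤ _ := mul_le_mul_of_nonneg_left hyx hK
    linarith [hmF y hy]

namespace ConvexOn

variable {S : Set ℝ} {f : ℝ → ℝ} {x f' : ℝ}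

lemma add_mul_sub_le_of_hasDerivAt (hf : ConvexOn ℝ S f) (hx : x ∈ S) {y : ℝ} (hy : y ∈ S)
    (hd : HasDerivAt f f' x) : f x + f' * (y - x) ≤ f y := by
  rcases lt_trichotomy x y with hxy | rfl | hyx
  · have := hf.le_slope_of_hasDerivAt hx hy hxy hd
    rw [slope_def_field, le_div_iff₀ (sub_pos.2 hxy)] at this
    linarith
  · simp
  · have := hf.slope_le_of_hasDerivAt hy hx hyx hd
    rw [slope_def_field, div_le_iff₀ (sub_pos.2 hyx)] at this
    linarith

lemma sub_mul_sub_nonpos_of_isMinOn (hf : ConvexOn ℝ S f) (hx : x ∈ S) (hd : HasDerivAt f f' x)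
    {t p : ℝ} (hp : p ∈ S) (hmin : IsMinOn (fun y => f y - t * y) S p) :
    (f' - t) * (p - x) ≤ 0 := by
  have htangent := hf.add_mul_sub_le_of_hasDerivAt hx hp hd
  have hpx := isMinOn_iff.1 hmin x hx
  linarith

variable {a b : ℝ}

lemma integrableOn_rightDeriv (hf : ConvexOn ℝ (Icc a b) f) (hfc : ContinuousOn f (Icc a b)) :
    IntegrableOn (fun x => derivWithin f (Ioi x) x) (Ioc a b) := by
  rcases le_or_gt b a with hba | hab
  · simp [Ioc_eq_empty_of_le hba]
  set r := fun x => derivWithin f (Ioi x) x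
  have hr : ∀ x ∈ Ioo a b, HasDerivWithinAt f (r x) (Ioi x) x := fun x hx =>
    hf.hasDerivWithinAt_rightDeriv_of_mem_interior (by rwa [interior_Icc])
  have hmono : MonotoneOn r (Ioo a b) := by
    simpa only [interior_Icc] using hf.monotoneOn_rightDeriv
  obtain ⟨m, ham, hmb⟩ := exists_between hab
  -- on each side of `m`, tilting `f` by the slope `r m` makes the right derivative one-signed
  have hleft : IntegrableOn (fun x => r m - r x) (Ioc a m) :=
    intervalIntegral.integrableOn_deriv_right_of_nonneg (g := fun x => r m * x - f x)
      ((continuousOn_const.mul continuousOn_id).sub (hfc.mono (Icc_subset_Icc_right hmb.le)))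
      (fun x hx => (((hasDerivWithinAt_id x _).const_mul (r m)).sub
        (hr x ⟨hx.1, hx.2.trans hmb⟩)).congr_deriv (by simp))
      (fun x hx => sub_nonneg.2 (hmono ⟨hx.1, hx.2.trans hmb⟩ ⟨ham, hmb⟩ hx.2.le))
  have hright : IntegrableOn (fun x => r x - r m) (Ioc m b) :=
    intervalIntegral.integrableOn_deriv_right_of_nonneg (g := fun x => f x - r m * x)
      ((hfc.mono (Icc_subset_Icc_left ham.le)).sub (continuousOn_const.mul continuousOn_id))
      (fun x hx => ((hr x ⟨ham.trans hx.1, hx.2⟩).sub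
        ((hasDerivWithinAt_id x _).const_mul (r m))).congr_deriv (by simp))
      (fun x hx => sub_nonneg.2 (hmono ⟨ham, hmb⟩ ⟨ham.trans hx.1, hx.2⟩ hx.1.le))
  rw [← Ioc_union_Ioc_eq_Ioc ham.le hmb.le]
  refine IntegrableOn.union ?_ ?_
  · exact ((integrableOn_const (C := r m) measure_Ioc_lt_top.ne).sub hleft).congr_fun
      (fun x _ => by simp) measurableSet_Ioc
  · exact (hright.add (integrableOn_const (C := r m) measure_Ioc_lt_top.ne)).congr_fun
      (fun x _ => by simp) measurableSet_Ioc

lemma integral_rightDeriv_eq_sub (hf : ConvexOn ℝ (Icc a b) f) (hfc : ContinuousOn f (Icc a b))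
    (hab : a ≤ b) : ∫ x in a..b, derivWithin f (Ioi x) x = f b - f a :=
  intervalIntegral.integral_eq_sub_of_hasDeriv_right_of_le hab hfc
    (fun _ hx => hf.hasDerivWithinAt_rightDeriv_of_mem_interior (by rwa [interior_Icc]))
    ((intervalIntegrable_iff_integrableOn_Ioc_of_le hab).2 (hf.integrableOn_rightDeriv hfc))

lemma ae_hasDerivAt_rightDeriv (hf : ConvexOn ℝ (Icc a b) f) (hfc : ContinuousOn f (Icc a b)) :
    ∀ᵐ x, x ∈ Ioo a b → HasDerivAt f (derivWithin f (Ioi x) x) x := by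
  rcases le_or_gt b a with hba | hab
  · exact Eventually.of_forall fun x hx => absurd (hx.1.trans hx.2) (not_lt.2 hba)
  have hint : IntervalIntegrable (fun x => derivWithin f (Ioi x) x) volume a b :=
    (intervalIntegrable_iff_integrableOn_Ioc_of_le hab.le).2 (hf.integrableOn_rightDeriv hfc)
  -- `f` is a primitive of its right derivative, so Lebesgue differentiation applies
  filter_upwards [hint.ae_hasDerivAt_integral] with x hx hxab
  have hprimitive : f =ᶠ[𝓝 x] fun y => f a + ∫ t in a..y, derivWithin f (Ioi t) t := by
    filter_upwards [Ioo_mem_nhds hxab.1 hxab.2] with y hy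
    rw [(hf.subset (Icc_subset_Icc_right hy.2.le) (convex_Icc a y)).integral_rightDeriv_eq_sub
      (hfc.mono (Icc_subset_Icc_right hy.2.le)) hy.1.le]
    ring
  have hxuIcc : x ∈ uIcc a b := by rw [uIcc_of_le hab.le]; exact Ioo_subset_Icc_self hxab
  exact ((hx hxuIcc a left_mem_uIcc).const_add (f a)).congr_of_eventuallyEq hprimitive

lemma ae_hasDerivAt_derivWithin_Icc (hf : ConvexOn ℝ (Icc a b) f)
    (hfc : ContinuousOn f (Icc a b)) :
    ∀ᵐ x, x ∈ Ioo a b → HasDerivAt f (derivWithin f (Icc a b) x) x := by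
  filter_upwards [hf.ae_hasDerivAt_rightDeriv hfc] with x hx hxab
  rw [derivWithin_of_mem_nhds (Icc_mem_nhds hxab.1 hxab.2)]
  exact (hx hxab).differentiableAt.hasDerivAt

lemma derivWithin_Icc_ae_eq_rightDeriv (hf : ConvexOn ℝ (Icc a b) f)
    (hfc : ContinuousOn f (Icc a b)) :
    derivWithin f (Icc a b) =ᵐ[volume.restrict (Ioo a b)] fun x => derivWithin f (Ioi x) x := by
  rw [EventuallyEq, ae_restrict_iff' measurableSet_Ioo]
  filter_upwards [hf.ae_hasDerivAt_derivWithin_Icc hfc, hf.ae_hasDerivAt_rightDeriv hfc]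
    with x hIcc hIoi hx
  exact (hIcc hx).unique (hIoi hx)

lemma integrableOn_derivWithin_Icc (hf : ConvexOn ℝ (Icc a b) f)
    (hfc : ContinuousOn f (Icc a b)) : IntegrableOn (derivWithin f (Icc a b)) (Ioo a b) :=
  ((hf.integrableOn_rightDeriv hfc).mono_set Ioo_subset_Ioc_self).congr
    (hf.derivWithin_Icc_ae_eq_rightDeriv hfc).symm

lemma setIntegral_derivWithin_Icc (hf : ConvexOn ℝ (Icc a b) f)
    (hfc : ContinuousOn f (Icc a b)) (hab : a ≤ b) :
    ∫ x in Ioo a b, derivWithin f (Icc a b) x = f b - f a := by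
  rw [integral_congr_ae (hf.derivWithin_Icc_ae_eq_rightDeriv hfc), ← integral_Ioc_eq_integral_Ioo,
    ← intervalIntegral.integral_of_le hab, hf.integral_rightDeriv_eq_sub hfc hab]

end ConvexOn

section ConvexEnvelope

variable {a b x : ℝ} {F G : ℝ → ℝ}

lemma convEnv_le_chord (hF : BddBelow (F '' Icc a b)) {lam x₀ x₁ : ℝ} (hlam : lam ∈ Icc (0:ℝ) 1)
    (hx₀ : x₀ ∈ Icc a b) (hx₁ : x₁ ∈ Icc a b) :
    convEnv a b F ((1 - lam) * x₀ + lam * x₁) ≤ (1 - lam) * F x₀ + lam * F x₁ := by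
  obtain ⟨m, hm⟩ := hF
  refine csInf_le ⟨m, ?_⟩ ⟨lam, x₀, x₁, hlam, hx₀, hx₁, rfl, rfl⟩
  rintro _ ⟨μ, y₀, y₁, ⟨hμ₀, hμ₁⟩, hy₀, hy₁, -, rfl⟩
  nlinarith [hm (mem_image_of_mem F hy₀), hm (mem_image_of_mem F hy₁)]

lemma convEnv_le (hF : BddBelow (F '' Icc a b)) (hx : x ∈ Icc a b) : convEnv a b F x ≤ F x := by
  simpa using convEnv_le_chord hF (lam := 0) ⟨le_rfl, zero_le_one⟩ hx hx

lemma le_convEnv {c t : ℝ} (hct : ∀ y ∈ Icc a b, c + t * y ≤ F y) (hx : x ∈ Icc a b) :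
    c + t * x ≤ convEnv a b F x := by
  refine le_csInf ⟨F x, 0, x, x, ⟨le_rfl, zero_le_one⟩, hx, hx, by ring, by ring⟩ ?_
  rintro _ ⟨lam, x₀, x₁, ⟨hl₀, hl₁⟩, hx₀, hx₁, rfl, rfl⟩
  nlinarith [hct x₀ hx₀, hct x₁ hx₁]

lemma exists_affine_le_eq_convEnv (hF : BddBelow (F '' Icc a b)) (hx : x ∈ Ioo a b) :
    ∃ c t : ℝ, (∀ y ∈ Icc a b, c + t * y ≤ F y) ∧ c + t * x = convEnv a b F x := by
  set E := convEnv a b F x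
  have hchord : ∀ u ∈ Ico a x, ∀ v ∈ Ioc x b, (E - F u) / (x - u) ≤ (F v - E) / (v - x) := by
    rintro u ⟨hau, hux⟩ v ⟨hxv, hvb⟩
    have hvu : 0 < v - u := by linarith
    have hE := convEnv_le_chord hF (lam := (x - u) / (v - u))
      ⟨div_nonneg (by linarith) hvu.le, (div_le_one hvu).2 (by linarith)⟩
      ⟨hau, by linarith [hx.2]⟩ ⟨by linarith [hx.1], hvb⟩
    rw [show (1 - (x - u) / (v - u)) * u + (x - u) / (v - u) * v = x by field_simp; ring,
      show (1 - (x - u) / (v - u)) * F u + (x - u) / (v - u) * F v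
        = ((v - x) * F u + (x - u) * F v) / (v - u) by field_simp; ring, le_div_iff₀ hvu] at hE
    rw [div_le_div_iff₀ (sub_pos.2 hux) (sub_pos.2 hxv)]
    linarith
  set A := (fun u => (E - F u) / (x - u)) '' Ico a x
  have hA : ∀ v ∈ Ioc x b, ∀ α ∈ A, α ≤ (F v - E) / (v - x) := by
    rintro v hv _ ⟨u, hu, rfl⟩
    exact hchord u hu v hv
  refine ⟨E - sSup A * x, sSup A, fun y hy => ?_, by ring⟩
  rcases lt_trichotomy y x with hyx | rfl | hxy
  · have := le_csSup ⟨_, hA b ⟨hx.2, le_rfl⟩⟩ (mem_image_of_mem _ ⟨hy.1, hyx⟩)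
    rw [div_le_iff₀ (sub_pos.2 hyx)] at this
    linarith
  · simpa using convEnv_le hF hy
  · have := csSup_le (nonempty_Ico.2 hx.1 |>.image _) (hA y ⟨hxy, hy.2⟩)
    rw [le_div_iff₀ (sub_pos.2 hxy)] at this
    linarith

lemma convexOn_convEnv (hF : BddBelow (F '' Icc a b)) : ConvexOn ℝ (Icc a b) (convEnv a b F) := by
  refine convexOn_iff_slope_mono_adjacent.2 ⟨convex_Icc a b, fun x y z hx hz hxy hyz => ?_⟩
  obtain ⟨c, t, hct, hy⟩ := exists_affine_le_eq_convEnv hF ⟨hx.1.trans_lt hxy, hyz.trans_le hz.2⟩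
  have hx' := le_convEnv hct hx
  have hz' := le_convEnv hct hz
  calc (convEnv a b F y - convEnv a b F x) / (y - x) ≤ t := by
        rw [div_le_iff₀ (sub_pos.2 hxy)]; linarith
    _ ≤ (convEnv a b F z - convEnv a b F y) / (z - y) := by
        rw [le_div_iff₀ (sub_pos.2 hyz)]; linarith

/-- At an endpoint `x` of `[a, b]`, `y ↦ dist y x` is affine on `[a, b]`. -/
lemma le_convEnv_of_endpoint (hx : x = a ∨ x = b) {c K : ℝ}
    (hF : ∀ y ∈ Icc a b, c - K * dist y x ≤ F y) {y : ℝ} (hy : y ∈ Icc a b) :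
    c - K * dist y x ≤ convEnv a b F y := by
  rcases hx with rfl | rfl
  · have hdist : ∀ z ∈ Icc x b, dist z x = z - x := fun z hz => by
      rw [Real.dist_eq, abs_of_nonneg (sub_nonneg.2 hz.1)]
    have := le_convEnv (F := F) (c := c + K * x) (t := -K)
      (fun z hz => by have := hF z hz; rw [hdist z hz] at this; linarith) hy
    rw [hdist y hy]
    linarith
  · have hdist : ∀ z ∈ Icc a x, dist z x = x - z := fun z hz => by
      rw [Real.dist_eq, abs_of_nonpos (sub_nonpos.2 hz.2)]; ring
    have := le_convEnv (F := F) (c := c - K * x) (t := K)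
      (fun z hz => by have := hF z hz; rw [hdist z hz] at this; linarith) hy
    rw [hdist y hy]
    linarith

lemma endpoint_mem_Icc (hab : a ≤ b) (hx : x = a ∨ x = b) : x ∈ Icc a b := by
  rcases hx with rfl | rfl
  exacts [left_mem_Icc.2 hab, right_mem_Icc.2 hab]

lemma convEnv_eq_of_endpoint (hF : ContinuousOn F (Icc a b)) (hab : a ≤ b) (hx : x = a ∨ x = b) :
    convEnv a b F x = F x := by
  have hxI := endpoint_mem_Icc hab hx
  refine le_antisymm (convEnv_le (isCompact_Icc.bddBelow_image hF) hxI)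
    (le_of_forall_sub_le fun ε hε => ?_)
  obtain ⟨K, hK⟩ := hF.exists_forall_sub_sub_mul_dist_le isCompact_Icc hxI hε
  simpa using le_convEnv_of_endpoint hx hK hxI

lemma continuousWithinAt_convEnv_of_endpoint (hF : ContinuousOn F (Icc a b)) (hab : a ≤ b)
    (hx : x = a ∨ x = b) : ContinuousWithinAt (convEnv a b F) (Icc a b) x := by
  have hxI := endpoint_mem_Icc hab hx
  rw [ContinuousWithinAt, convEnv_eq_of_endpoint hF hab hx]
  refine tendsto_order.2 ⟨fun l hl => ?_, fun u hu => ?_⟩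
  · obtain ⟨K, hK⟩ := hF.exists_forall_sub_sub_mul_dist_le isCompact_Icc hxI
      (ε := (F x - l) / 2) (by linarith)
    have hcone : Tendsto (fun y => F x - (F x - l) / 2 - K * dist y x) (𝓝[Icc a b] x)
        (𝓝 (F x - (F x - l) / 2)) := by
      have hdist : Tendsto (fun y => dist y x) (𝓝[Icc a b] x) (𝓝 0) :=
        tendsto_nhdsWithin_of_tendsto_nhds
          ((continuous_id.dist continuous_const).tendsto' x 0 (dist_self x))
      simpa using tendsto_const_nhds.sub (hdist.const_mul K)
    filter_upwards [hcone.eventually (lt_mem_nhds (show l < F x - (F x - l) / 2 by linarith)),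
      self_mem_nhdsWithin] with y hly hy
    exact hly.trans_le (le_convEnv_of_endpoint hx hK hy)
  · filter_upwards [(hF x hxI).eventually (gt_mem_nhds hu), self_mem_nhdsWithin] with y hyu hy
    exact (convEnv_le (isCompact_Icc.bddBelow_image hF) hy).trans_lt hyu

lemma continuousOn_convEnv (hF : ContinuousOn F (Icc a b)) (hab : a < b) :
    ContinuousOn (convEnv a b F) (Icc a b) :=
  (convexOn_convEnv (isCompact_Icc.bddBelow_image hF)).continuousOn_Icc hab
    ((continuousWithinAt_Icc_iff_Ici hab).1
      (continuousWithinAt_convEnv_of_endpoint hF hab.le (Or.inl rfl)))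
    ((continuousWithinAt_Icc_iff_Iic hab).1
      (continuousWithinAt_convEnv_of_endpoint hF hab.le (Or.inr rfl)))

lemma isMinOn_convEnv_sub_mul (hF : BddBelow (F '' Icc a b)) {t p : ℝ} (hp : p ∈ Icc a b)
    (hmin : IsMinOn (fun y => F y - t * y) (Icc a b) p) :
    IsMinOn (fun y => convEnv a b F y - t * y) (Icc a b) p := by
  refine isMinOn_iff.2 fun y hy => ?_
  have hsupport := le_convEnv (F := F) (c := F p - t * p) (t := t)
    (fun z hz => by linarith [isMinOn_iff.1 hmin z hz]) hy
  have := convEnv_le hF hp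
  linarith

lemma le_of_hasDerivAt_convEnv (hab : a < b) (hF : ContinuousOn F (Icc a b))
    (hG : ContinuousOn G (Icc a b)) (hGF : MonotoneOn (fun y => G y - F y) (Icc a b))
    (hx : x ∈ Ioo a b) {u v : ℝ} (hu : HasDerivAt (convEnv a b F) u x)
    (hv : HasDerivAt (convEnv a b G) v x) : u ≤ v := by
  by_contra! hvu
  obtain ⟨t, hvt, htu⟩ := exists_between hvu
  have hxI := Ioo_subset_Icc_self hx
  have hFb := isCompact_Icc.bddBelow_image hF
  have hGb := isCompact_Icc.bddBelow_image hG
  have hcont : ∀ {H : ℝ → ℝ}, ContinuousOn H (Icc a b) →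
      ContinuousOn (fun y => H y - t * y) (Icc a b) :=
    fun hH => hH.sub (continuousOn_const.mul continuousOn_id)
  obtain ⟨p, hp, hpmin⟩ := isCompact_Icc.exists_isMinOn (nonempty_Icc.2 hab.le) (hcont hF)
  obtain ⟨q, hq, hqmin⟩ := isCompact_Icc.exists_isMinOn (nonempty_Icc.2 hab.le) (hcont hG)
  -- a minimiser of `F - t y` lies left of `x` since `u > t`, one of `G - t y` right of it
  have hleft : ∀ r ∈ Icc a b, IsMinOn (fun y => F y - t * y) (Icc a b) r → r ≤ x := by
    intro r hr hrmin
    have := (convexOn_convEnv hFb).sub_mul_sub_nonpos_of_isMinOn hxI hu hr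
      (isMinOn_convEnv_sub_mul hFb hr hrmin)
    exact sub_nonpos.1 (nonpos_of_mul_nonpos_right this (sub_pos.2 htu))
  have hxq : x ≤ q := by
    have := (convexOn_convEnv hGb).sub_mul_sub_nonpos_of_isMinOn hxI hv hq
      (isMinOn_convEnv_sub_mul hGb hq hqmin)
    exact sub_nonneg.1 (nonneg_of_mul_nonpos_right this (sub_neg.2 hvt))
  have hqminF : IsMinOn (fun y => F y - t * y) (Icc a b) q := by
    refine isMinOn_iff.2 fun y hy => ?_
    have hGFpq : G p - F p ≤ G q - F q := hGF hp hq ((hleft p hp hpmin).trans hxq)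
    have hGqp : G q - t * q ≤ G p - t * p := isMinOn_iff.1 hqmin p hp
    have hFpy : F p - t * p ≤ F y - t * y := isMinOn_iff.1 hpmin y hy
    linarith
  have hqx : q = x := le_antisymm (hleft q hq hqminF) hxq
  subst hqx
  have hmin := isMinOn_convEnv_sub_mul hFb hq hqminF
  have := (hmin.isLocalMin (Icc_mem_nhds hx.1 hx.2)).hasDerivAt_eq_zero
    (hu.sub ((hasDerivAt_id q).const_mul t))
  simp only [mul_one] at this
  linarith

lemma derivWithin_convEnv_ae_le (hab : a < b) (hF : ContinuousOn F (Icc a b))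
    (hG : ContinuousOn G (Icc a b)) (hGF : MonotoneOn (fun y => G y - F y) (Icc a b)) :
    derivWithin (convEnv a b F) (Icc a b) ≤ᵐ[volume.restrict (Ioo a b)]
      derivWithin (convEnv a b G) (Icc a b) := by
  have hderiv : ∀ {H : ℝ → ℝ}, ContinuousOn H (Icc a b) →
      ∀ᵐ x, x ∈ Ioo a b → HasDerivAt (convEnv a b H) (derivWithin (convEnv a b H) (Icc a b) x) x :=
    fun hH => (convexOn_convEnv (isCompact_Icc.bddBelow_image hH)).ae_hasDerivAt_derivWithin_Icc
      (continuousOn_convEnv hH hab)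
  rw [EventuallyLE, ae_restrict_iff' measurableSet_Ioo]
  filter_upwards [hderiv hF, hderiv hG] with x hFx hGx hx
  exact le_of_hasDerivAt_convEnv hab hF hG hGF hx (hFx hx) (hGx hx)

end ConvexEnvelope

section Tcv

variable {a b : ℝ} {f g : ℝ → ℝ}

lemma continuousOn_primit (hab : a ≤ b) (hf : IntervalIntegrable f volume a b) :
    ContinuousOn (primit a f) (Icc a b) := by
  rw [← uIcc_of_le hab]
  exact intervalIntegral.continuousOn_primitive_interval' hf left_mem_uIcc

lemma monotoneOn_primit_sub (hab : a ≤ b) (hf : IntervalIntegrable f volume a b)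
    (hg : IntervalIntegrable g volume a b) (hfg : f ≤ g) :
    MonotoneOn (fun x => primit a g x - primit a f x) (Icc a b) := by
  have hsub : ∀ {φ : ℝ → ℝ}, IntervalIntegrable φ volume a b →
      ∀ x ∈ Icc a b, IntervalIntegrable φ volume a x := fun hφ x hx =>
    hφ.mono_set (by rw [uIcc_of_le hab, uIcc_of_le hx.1]; exact Icc_subset_Icc_right hx.2)
  intro x hx y hy hxy
  simp only [primit]
  rw [← intervalIntegral.integral_sub (hsub hg x hx) (hsub hf x hx),
    ← intervalIntegral.integral_sub (hsub hg y hy) (hsub hf y hy)]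
  exact intervalIntegral.integral_mono_interval le_rfl hx.1 hxy
    (Eventually.of_forall fun t => sub_nonneg.2 (hfg t)) (hsub (hg.sub hf) y hy)

lemma integrableOn_Tcv (hab : a < b) (hf : IntervalIntegrable f volume a b) :
    IntegrableOn (Tcv a b f) (Ioo a b) :=
  have hF := continuousOn_primit hab.le hf
  (convexOn_convEnv (isCompact_Icc.bddBelow_image hF)).integrableOn_derivWithin_Icc
    (continuousOn_convEnv hF hab)

lemma setIntegral_Tcv (hab : a < b) (hf : IntervalIntegrable f volume a b) :
    ∫ x in Ioo a b, Tcv a b f x = ∫ x in Ioo a b, f x := by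
  have hF := continuousOn_primit hab.le hf
  rw [Tcv, (convexOn_convEnv (isCompact_Icc.bddBelow_image hF)).setIntegral_derivWithin_Icc
      (continuousOn_convEnv hF hab) hab.le,
    convEnv_eq_of_endpoint hF hab.le (Or.inr rfl), convEnv_eq_of_endpoint hF hab.le (Or.inl rfl),
    primit, primit, intervalIntegral.integral_same, sub_zero,
    intervalIntegral.integral_of_le hab.le, integral_Ioc_eq_integral_Ioo]

lemma Tcv_ae_le (hab : a < b) (hf : IntervalIntegrable f volume a b)
    (hg : IntervalIntegrable g volume a b) (hfg : f ≤ g) :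
    Tcv a b f ≤ᵐ[volume.restrict (Ioo a b)] Tcv a b g :=
  derivWithin_convEnv_ae_le hab (continuousOn_primit hab.le hf) (continuousOn_primit hab.le hg)
    (monotoneOn_primit_sub hab.le hf hg hfg)

end Tcv

/-- `‖Tf - Tg‖_{L¹(a,b)} ≤ ‖f - g‖_{L¹(a,b)}` for `f, g ∈ L¹(a,b)`. -/
theorem Tcv_L1_contraction (a b : ℝ) (hab : a < b) (f g : ℝ → ℝ)
    (hf : IntervalIntegrable f MeasureTheory.volume a b)
    (hg : IntervalIntegrable g MeasureTheory.volume a b) :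
    (∫ x in a..b, |Tcv a b f x - Tcv a b g x|) ≤ ∫ x in a..b, |f x - g x| := by
  have hL1 : ∀ {φ : ℝ → ℝ}, IntervalIntegrable φ volume a b ↔ IntegrableOn φ (Ioo a b) :=
    intervalIntegrable_iff_integrableOn_Ioo_of_le hab.le
  rw [intervalIntegral.integral_of_le hab.le, intervalIntegral.integral_of_le hab.le,
    integral_Ioc_eq_integral_Ioo, integral_Ioc_eq_integral_Ioo]
  exact integral_abs_sub_le_of_monotone_of_integral_eq
    (fun φ hφ => integrableOn_Tcv hab (hL1.2 hφ))
    (fun φ hφ => setIntegral_Tcv hab (hL1.2 hφ))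
    (fun φ ψ hφ hψ hφψ => Tcv_ae_le hab (hL1.2 hφ) (hL1.2 hψ) hφψ)
    (hL1.1 hf) (hL1.1 hg)
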